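/- arXiv:1709.02645 — 4 statements merged into one kernel-verified Lean document; each statement's English description precedes it below -/
import Mathlib

section
/- Let R2 > 0 and R0 < √R2. If x : [t0, T) → ℝ is a solution of ẋ(t) = R0 − R2·t² + x(t)² with x(t0) < √R2 · t0, then x(t) < √R2 · t for all t ∈ [t0, T). -/
/-! On the line `x = √R2 t` the vector field reduces to `R0`, which is smaller than the slope `√R2`
of the line, so a solution can only touch the line while crossing it downwards. The fencing
inequality gives `x ≤ √R2 t`; at a first contact from below the left derivative of `x - √R2 t` would
be `≥ 0`, contradicting `R0 - √R2 < 0`, which upgrades this to strict inequality. -/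

open Set Topology

theorem HasDerivWithinAt.nonneg_of_isMaxOn_Icc {g : ℝ → ℝ} {g' a b : ℝ} (hab : a < b)
    (hg : HasDerivWithinAt g g' (Icc a b) b) (hmax : IsMaxOn g (Icc a b) b) : 0 ≤ g' := by
  have hdir : a - b ∈ posTangentConeAt (Icc a b) b :=
    sub_mem_posTangentConeAt_of_segment_subset (by rw [segment_symm, segment_eq_Icc hab.le])
  have hslope : g' * (a - b) ≤ 0 := by
    simpa [mul_comm] using hmax.localize.hasFDerivWithinAt_nonpos hg hdir
  nlinarith

theorem image_lt_of_deriv_lt_deriv_boundary_Ico {f f' B B' : ℝ → ℝ} {a b : ℝ}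
    (hf : ∀ x ∈ Ico a b, HasDerivWithinAt f (f' x) (Ico a b) x)
    (hB : ∀ x ∈ Ico a b, HasDerivWithinAt B (B' x) (Ico a b) x) (ha : f a < B a)
    (bound : ∀ x ∈ Ico a b, f x = B x → f' x < B' x) : ∀ ⦃x⦄, x ∈ Ico a b → f x < B x := by
  intro x hx
  have hsub : Icc a x ⊆ Ico a b := Icc_subset_Ico_right hx.2
  have hright : ∀ y ∈ Ico a x, Ico a b ∈ 𝓝[Ici y] y := fun y hy =>
    Filter.mem_of_superset (Ico_mem_nhdsGE (hy.2.trans hx.2)) (Ico_subset_Ico_left hy.1)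
  have hle : ∀ y ∈ Icc a x, f y ≤ B y :=
    image_le_of_deriv_right_lt_deriv_boundary'
      (fun y hy => ((hf y (hsub hy)).continuousWithinAt).mono hsub)
      (fun y hy => (hf y (hsub (Ico_subset_Icc_self hy))).mono_of_mem_nhdsWithin (hright y hy))
      ha.le (fun y hy => ((hB y (hsub hy)).continuousWithinAt).mono hsub)
      (fun y hy => (hB y (hsub (Ico_subset_Icc_self hy))).mono_of_mem_nhdsWithin (hright y hy))
      (fun y hy => bound y (hsub (Ico_subset_Icc_self hy)))
  rcases hx.1.eq_or_lt with rfl | hax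
  · exact ha
  refine (hle x (right_mem_Icc.2 hax.le)).lt_of_ne fun hcontact => ?_
  have hmax : IsMaxOn (fun y => f y - B y) (Icc a x) x := fun y hy => by
    simpa [hcontact] using hle y hy
  have hderiv := ((hf x hx).sub (hB x hx)).mono hsub
  linarith [hderiv.nonneg_of_isMaxOn_Icc hax hmax, bound x hx hcontact]

theorem stmt_1 (R2 R0 t0 T : ℝ) (hR2 : 0 < R2) (hR0 : R0 < Real.sqrt R2)
    (x : ℝ → ℝ)
    (hx : ∀ t ∈ Set.Ico t0 T,
      HasDerivWithinAt x (R0 - R2 * t ^ 2 + (x t) ^ 2) (Set.Ico t0 T) t)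
    (hinit : x t0 < Real.sqrt R2 * t0) :
    ∀ t ∈ Set.Ico t0 T, x t < Real.sqrt R2 * t := by
  refine image_lt_of_deriv_lt_deriv_boundary_Ico hx
    (fun t _ => (hasDerivWithinAt_id t _).const_mul (Real.sqrt R2)) hinit ?_
  intro t _ hcontact
  have hfield : R0 - R2 * t ^ 2 + x t ^ 2 = R0 := by
    rw [hcontact, mul_pow, Real.sq_sqrt hR2.le]; ring
  simpa [hfield] using hR0
end

section
/- Let R2 > 0, R0 ≥ √R2, δ > 0 and t0 ≥ 0. If x : [t0, T) → ℝ solves ẋ(t) = R0 − R2·t² + x(t)² and x(t0) ≥ √R2 · t0 + δ, then x(t) ≥ √R2 · t + δ for all t ∈ [t0, T). -/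
theorem stmt_2 (R2 R0 δ t0 T : ℝ) (hR2 : 0 < R2) (hR0 : Real.sqrt R2 ≤ R0)
    (hδ : 0 < δ) (ht0 : 0 ≤ t0)
    (x : ℝ → ℝ)
    (hx : ∀ t ∈ Set.Ico t0 T,
      HasDerivWithinAt x (R0 - R2 * t ^ 2 + (x t) ^ 2) (Set.Ico t0 T) t)
    (hinit : Real.sqrt R2 * t0 + δ ≤ x t0) :
    ∀ t ∈ Set.Ico t0 T, Real.sqrt R2 * t + δ ≤ x t := by
  intro t₁ ht₁
  obtain ⟨ht₁0, ht₁T⟩ := ht₁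
  have hsub : Set.Icc t0 t₁ ⊆ Set.Ico t0 T := fun s hs =>
    ⟨hs.1, lt_of_le_of_lt hs.2 ht₁T⟩
  have hder : ∀ s ∈ Set.Ico t0 t₁,
      HasDerivWithinAt x (R0 - R2 * s ^ 2 + (x s) ^ 2) (Set.Ici s) s := by
    intro s hs
    have hsmem : s ∈ Set.Ico t0 T := ⟨hs.1, lt_of_lt_of_le hs.2 ht₁T.le⟩
    have h1 := (hx s hsmem).mono (Set.Ico_subset_Ico_left hs.1 : Set.Ico s T ⊆ _)
    refine h1.mono_of_mem_nhdsWithin ?_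
    have : Set.Ico s T = Set.Ici s ∩ Set.Iio T := by
      ext y; simp [Set.mem_Ico, Set.mem_Ici, Set.mem_Iio, and_comm]
    rw [this]
    exact inter_mem_nhdsWithin _ (Iio_mem_nhds hsmem.2)
  have key : ∀ s ∈ Set.Icc t0 t₁, Real.sqrt R2 * s + δ ≤ x s := by
    refine image_le_of_deriv_right_lt_deriv_boundary'
      (f := fun s => Real.sqrt R2 * s + δ) (f' := fun _ => Real.sqrt R2)
      (B := x) (B' := fun s => R0 - R2 * s ^ 2 + (x s) ^ 2)
      ?_ ?_ hinit ?_ hder ?_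
    · exact (Continuous.continuousOn (by continuity))
    · intro s _
      simpa using ((((hasDerivAt_id s).const_mul (Real.sqrt R2)).add_const δ).hasDerivWithinAt
        (s := Set.Ici s))
    · exact fun s hs => ((hx s (hsub hs)).continuousWithinAt).mono hsub
    · intro s hs heq
      have hs0 : 0 ≤ s := le_trans ht0 hs.1
      have hsq : Real.sqrt R2 ^ 2 = R2 := Real.sq_sqrt hR2.le
      have hsqrt0 : 0 ≤ Real.sqrt R2 := Real.sqrt_nonneg R2
      rw [← heq]
      have : R0 - R2 * s ^ 2 + (Real.sqrt R2 * s + δ) ^ 2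
          = R0 + 2 * Real.sqrt R2 * s * δ + δ ^ 2 := by
        ring_nf
        nlinarith [hsq]
      rw [this]
      nlinarith [mul_nonneg (mul_nonneg (mul_nonneg (by norm_num : (0:ℝ) ≤ 2) hsqrt0) hs0) hδ.le]
  exact key t₁ ⟨ht₁0, le_refl _⟩
end

section
/- Let q < 0 and let x : [0, ∞) → ℝ be a solution of ẋ = q + x² with initial value x(0) ∈ (−∞, √(−q)). Then x(t) → −√(−q) as t → ∞. -/
/-!
Write `a = √(-q)`, so that the vector field `q + x²` vanishes exactly at `±a`. Since
`q + x²` is locally Lipschitz, solutions are unique, so a solution can neither reach nor cross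
an equilibrium; hence `x < a` for all time, and `x + a` keeps the sign it has at `t = 0`.
On each side of `-a` the sign of `q + x²` is then fixed, so `x` is monotone and bounded, hence
converges. A limit `L` of a solution must be an equilibrium (otherwise `ẋ → q + L² ≠ 0` would
force `x` to diverge), and `L < a`, so `L = -a`.
-/

open Set Filter Topology

lemma monotoneOn_Ici_of_hasDerivAt_nonneg {f f' : ℝ → ℝ} {a : ℝ}
    (hf : ∀ t ∈ Ici a, HasDerivAt f (f' t) t) (hf' : ∀ t ∈ Ici a, 0 ≤ f' t) :
    MonotoneOn f (Ici a) :=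
  monotoneOn_of_hasDerivWithinAt_nonneg (convex_Ici a) (HasDerivAt.continuousOn hf)
    (fun t ht => (hf t (interior_subset ht)).hasDerivWithinAt)
    (fun t ht => hf' t (interior_subset ht))

lemma antitoneOn_Ici_of_hasDerivAt_nonpos {f f' : ℝ → ℝ} {a : ℝ}
    (hf : ∀ t ∈ Ici a, HasDerivAt f (f' t) t) (hf' : ∀ t ∈ Ici a, f' t ≤ 0) :
    AntitoneOn f (Ici a) :=
  antitoneOn_of_hasDerivWithinAt_nonpos (convex_Ici a) (HasDerivAt.continuousOn hf)
    (fun t ht => (hf t (interior_subset ht)).hasDerivWithinAt)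
    (fun t ht => hf' t (interior_subset ht))

lemma MonotoneOn.exists_tendsto_atTop {f : ℝ → ℝ} {a : ℝ} (hf : MonotoneOn f (Ici a))
    (hb : BddAbove (f '' Ici a)) : ∃ L, Tendsto f atTop (𝓝 L) :=
  ⟨_, tendsto_comp_val_Ici_atTop.mp <|
    tendsto_atTop_ciSup (monotoneOn_iff_monotone.mp hf) (by rwa [← image_eq_range])⟩

lemma AntitoneOn.exists_tendsto_atTop {f : ℝ → ℝ} {a : ℝ} (hf : AntitoneOn f (Ici a))
    (hb : BddBelow (f '' Ici a)) : ∃ L, Tendsto f atTop (𝓝 L) :=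
  ⟨_, tendsto_comp_val_Ici_atTop.mp <|
    tendsto_atTop_ciInf (antitoneOn_iff_antitone.mp hf) (by rwa [← image_eq_range])⟩

lemma nonpos_of_tendsto_of_hasDerivAt {f f' : ℝ → ℝ} {L l : ℝ}
    (hf : ∀ᶠ t in atTop, HasDerivAt f (f' t) t) (hfL : Tendsto f atTop (𝓝 L))
    (hf'l : Tendsto f' atTop (𝓝 l)) : l ≤ 0 := by
  by_contra! hl
  obtain ⟨T, hT⟩ :=
    eventually_atTop.mp (hf.and (hf'l.eventually (lt_mem_nhds (half_lt_self hl))))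
  have hmono : MonotoneOn (fun t => f t - l / 2 * t) (Ici T) :=
    monotoneOn_Ici_of_hasDerivAt_nonneg
      (fun t ht => ((hT t ht).1.sub ((hasDerivAt_id t).const_mul (l / 2))).congr_deriv (by simp))
      (fun t ht => sub_nonneg.mpr (hT t ht).2.le)
  have hlin : Tendsto (fun t => f T - l / 2 * T + l / 2 * t) atTop atTop :=
    tendsto_atTop_add_const_left _ _ (tendsto_id.const_mul_atTop (half_pos hl))
  refine not_tendsto_nhds_of_tendsto_atTop (tendsto_atTop_mono' _ ?_ hlin) L hfL
  filter_upwards [eventually_ge_atTop T] with t ht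
  linarith [hmono self_mem_Ici ht ht]

lemma eq_zero_of_tendsto_of_hasDerivAt {f f' : ℝ → ℝ} {L l : ℝ}
    (hf : ∀ᶠ t in atTop, HasDerivAt f (f' t) t) (hfL : Tendsto f atTop (𝓝 L))
    (hf'l : Tendsto f' atTop (𝓝 l)) : l = 0 :=
  le_antisymm (nonpos_of_tendsto_of_hasDerivAt hf hfL hf'l) <| neg_nonpos.mp <|
    nonpos_of_tendsto_of_hasDerivAt (hf.mono fun _ h => h.neg) hfL.neg hf'l.neg

def SolvesOnIci (g x : ℝ → ℝ) : Prop :=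
  ∀ t ∈ Ici (0 : ℝ), HasDerivAt x (g (x t)) t

namespace SolvesOnIci

variable {g x : ℝ → ℝ} {c : ℝ}

theorem continuousOn (hx : SolvesOnIci g x) : ContinuousOn x (Ici 0) :=
  HasDerivAt.continuousOn hx

theorem apply_eq_of_apply_eq (hx : SolvesOnIci g x) (hg : LocallyLipschitz g) (hc : g c = 0)
    {s t : ℝ} (hs : 0 ≤ s) (ht : 0 ≤ t) (hxs : x s = c) : x t = c := by
  set I := Icc 0 (max s t)
  have hI : I ⊆ Ici 0 := Icc_subset_Ici_self
  obtain ⟨K, hK⟩ := hg.locallyLipschitzOn.exists_lipschitzOnWith_of_compact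
    ((isCompact_Icc.image_of_continuousOn (hx.continuousOn.mono hI)).union
      (isCompact_singleton (x := c)))
  have hxI : ∀ u ∈ I, x u ∈ x '' I ∪ {c} := fun u hu => Or.inl (mem_image_of_mem x hu)
  have hconst (u : ℝ) : HasDerivAt (fun _ => c) (g c) u := hc ▸ hasDerivAt_const u c
  rcases le_total s t with hst | hts
  · have hsub : Icc s t ⊆ I := Icc_subset_Icc hs (le_max_right s t)
    exact ODE_solution_unique_of_mem_Icc_right (v := fun _ => g) (fun _ _ => hK)
      (hx.continuousOn.mono (hsub.trans hI))
      (fun u hu => (hx u (hI (hsub (Ico_subset_Icc_self hu)))).hasDerivWithinAt)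
      (fun u hu => hxI u (hsub (Ico_subset_Icc_self hu))) continuousOn_const
      (fun u _ => (hconst u).hasDerivWithinAt) (fun _ _ => Or.inr rfl) hxs ⟨hst, le_rfl⟩
  · have hsub : Icc t s ⊆ I := Icc_subset_Icc ht (le_max_left s t)
    exact ODE_solution_unique_of_mem_Icc_left (v := fun _ => g) (fun _ _ => hK)
      (hx.continuousOn.mono (hsub.trans hI))
      (fun u hu => (hx u (hI (hsub (Ioc_subset_Icc_self hu)))).hasDerivWithinAt)
      (fun u hu => hxI u (hsub (Ioc_subset_Icc_self hu))) continuousOn_const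
      (fun u _ => (hconst u).hasDerivWithinAt) (fun _ _ => Or.inr rfl) hxs ⟨le_rfl, hts⟩

theorem apply_eq_of_mem_uIcc (hx : SolvesOnIci g x) (hg : LocallyLipschitz g) (hc : g c = 0)
    {s t : ℝ} (hs : 0 ≤ s) (ht : 0 ≤ t) (hcst : c ∈ uIcc (x s) (x t)) : x t = c := by
  have hsub : uIcc s t ⊆ Ici 0 := fun u hu => (le_min hs ht).trans hu.1
  obtain ⟨u, hu, hxu⟩ := intermediate_value_uIcc (hx.continuousOn.mono hsub) hcst
  exact hx.apply_eq_of_apply_eq hg hc (hsub hu) ht hxu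

theorem apply_le_of_apply_le (hx : SolvesOnIci g x) (hg : LocallyLipschitz g) (hc : g c = 0)
    {s t : ℝ} (hs : 0 ≤ s) (ht : 0 ≤ t) (hxs : x s ≤ c) : x t ≤ c := by
  by_contra! hxt
  exact hxt.ne' (hx.apply_eq_of_mem_uIcc hg hc hs ht (mem_uIcc.mpr (Or.inl ⟨hxs, hxt.le⟩)))

theorem le_apply_of_le_apply (hx : SolvesOnIci g x) (hg : LocallyLipschitz g) (hc : g c = 0)
    {s t : ℝ} (hs : 0 ≤ s) (ht : 0 ≤ t) (hxs : c ≤ x s) : c ≤ x t := by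
  by_contra! hxt
  exact hxt.ne (hx.apply_eq_of_mem_uIcc hg hc hs ht (mem_uIcc.mpr (Or.inr ⟨hxt.le, hxs⟩)))

theorem apply_lt_of_apply_lt (hx : SolvesOnIci g x) (hg : LocallyLipschitz g) (hc : g c = 0)
    {s t : ℝ} (hs : 0 ≤ s) (ht : 0 ≤ t) (hxs : x s < c) : x t < c := by
  by_contra! hxt
  exact hxs.ne (hx.apply_eq_of_mem_uIcc hg hc ht hs (mem_uIcc.mpr (Or.inr ⟨hxs.le, hxt⟩)))

theorem apply_eq_zero_of_tendsto (hx : SolvesOnIci g x) (hg : Continuous g) {L : ℝ}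
    (hL : Tendsto x atTop (𝓝 L)) : g L = 0 :=
  eq_zero_of_tendsto_of_hasDerivAt (eventually_ge_atTop 0 |>.mono hx) hL
    ((hg.tendsto L).comp hL)

end SolvesOnIci

theorem exists_tendsto_lt_of_solvesOnIci_sq {q a : ℝ} {x : ℝ → ℝ} (ha : 0 < a)
    (hqa : q + a ^ 2 = 0) (hx : SolvesOnIci (fun y => q + y ^ 2) x) (h0 : x 0 < a) :
    ∃ L < a, Tendsto x atTop (𝓝 L) := by
  have hg : LocallyLipschitz fun y : ℝ => q + y ^ 2 :=
    ContDiff.locallyLipschitz (𝕂 := ℝ) (by fun_prop)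
  have hqa' : q + (-a) ^ 2 = 0 := by rw [neg_sq, hqa]
  have hlt (t : ℝ) (ht : t ∈ Ici 0) : x t < a := hx.apply_lt_of_apply_lt hg hqa le_rfl ht h0
  rcases le_total (x 0) (-a) with h0 | h0
  · have hle (t : ℝ) (ht : t ∈ Ici 0) : x t ≤ -a :=
      hx.apply_le_of_apply_le hg hqa' le_rfl ht h0
    have hmono : MonotoneOn x (Ici 0) :=
      monotoneOn_Ici_of_hasDerivAt_nonneg hx fun t ht => by nlinarith [hle t ht]
    obtain ⟨L, hL⟩ := hmono.exists_tendsto_atTop ⟨-a, forall_mem_image.mpr hle⟩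
    have hLa : L ≤ -a := le_of_tendsto hL (eventually_ge_atTop 0 |>.mono hle)
    exact ⟨L, by linarith, hL⟩
  · have hge (t : ℝ) (ht : t ∈ Ici 0) : -a ≤ x t :=
      hx.le_apply_of_le_apply hg hqa' le_rfl ht h0
    have hanti : AntitoneOn x (Ici 0) :=
      antitoneOn_Ici_of_hasDerivAt_nonpos hx fun t ht => by nlinarith [hge t ht, hlt t ht]
    obtain ⟨L, hL⟩ := hanti.exists_tendsto_atTop ⟨-a, forall_mem_image.mpr hge⟩
    have hLx : L ≤ x 0 :=
      le_of_tendsto hL (eventually_ge_atTop 0 |>.mono fun t ht => hanti self_mem_Ici ht ht)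
    exact ⟨L, hLx.trans_lt (hlt 0 self_mem_Ici), hL⟩

theorem stmt_5 (q : ℝ) (hq : q < 0) (x : ℝ → ℝ)
    (hx : ∀ t : ℝ, 0 ≤ t → HasDerivAt x (q + (x t) ^ 2) t)
    (hinit : x 0 < Real.sqrt (-q)) :
    Filter.Tendsto x Filter.atTop (nhds (-Real.sqrt (-q))) := by
  set a := Real.sqrt (-q)
  have ha : 0 < a := Real.sqrt_pos.mpr (neg_pos.mpr hq)
  have hqa : q + a ^ 2 = 0 := by rw [Real.sq_sqrt (neg_nonneg.mpr hq.le)]; ring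
  have hsol : SolvesOnIci (fun y => q + y ^ 2) x := hx
  obtain ⟨L, hLa, hxL⟩ := exists_tendsto_lt_of_solvesOnIci_sq ha hqa hsol hinit
  have hL : q + L ^ 2 = 0 := hsol.apply_eq_zero_of_tendsto (by fun_prop) hxL
  have : L = -a := by nlinarith
  rwa [this] at hxL
end

section
/- Let A∞, B, S > 0, t_end ∈ ℝ, A(t) = A∞ + B / cosh(S·(t_end − 2t))², and let A_th ∈ (A∞, A∞ + B) be a threshold with Δ := A_th − A∞ > 0 and R := A∞ + B − A_th > 0. Then the set {t : A(t) > A_th} is an open interval of length t_e = (1/S)·arsinh(√(R/Δ)). -/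
theorem stmt_12 (Ainf B S tend Ath : ℝ) (hA : 0 < Ainf) (hB : 0 < B) (hS : 0 < S)
    (h1 : Ainf < Ath) (h2 : Ath < Ainf + B) :
    let Δ := Ath - Ainf
    let R := Ainf + B - Ath
    let A : ℝ → ℝ := fun t => Ainf + B / (Real.cosh (S * (tend - 2 * t))) ^ 2
    ∃ a b : ℝ, a < b ∧ {t : ℝ | Ath < A t} = Set.Ioo a b ∧
      b - a = (1 / S) * Real.arsinh (Real.sqrt (R / Δ)) := by
  intro Δ R A
  have hΔ : 0 < Δ := by simp only [Δ]; linarith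
  have hR : 0 < R := by simp only [R]; linarith
  set L : ℝ := Real.arsinh (Real.sqrt (R / Δ)) with hL
  have hsqrt : 0 < Real.sqrt (R / Δ) := Real.sqrt_pos.mpr (div_pos hR hΔ)
  have hLpos : 0 < L := by
    have := Real.arsinh_lt_arsinh.mpr hsqrt
    rwa [Real.arsinh_zero] at this
  refine ⟨(tend - L / S) / 2, (tend + L / S) / 2, by
    have : 0 < L / S := div_pos hLpos hS
    linarith, ?_, by field_simp; ring⟩
  ext t
  simp only [Set.mem_setOf_eq, Set.mem_Ioo, A]
  set u : ℝ := S * (tend - 2 * t) with hu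
  have hc : 0 < Real.cosh u ^ 2 := by positivity
  have hcsq : Real.cosh u ^ 2 = Real.sinh u ^ 2 + 1 := by
    nlinarith [Real.cosh_sq u]
  have key : Ath < Ainf + B / Real.cosh u ^ 2 ↔ |u| < L := by
    have s1 : Ath < Ainf + B / Real.cosh u ^ 2 ↔ Δ * Real.cosh u ^ 2 < B := by
      rw [← sub_lt_iff_lt_add', lt_div_iff₀ hc]
    have s2 : Δ * Real.cosh u ^ 2 < B ↔ Real.sinh u ^ 2 < R / Δ := by
      rw [lt_div_iff₀ hΔ, hcsq]
      constructor <;> intro h <;> [skip; skip] <;> simp only [Δ, R] at * <;> nlinarith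
    have s3 : Real.sinh u ^ 2 < R / Δ ↔ |Real.sinh u| < Real.sqrt (R / Δ) := by
      rw [Real.lt_sqrt (abs_nonneg _), sq_abs]
    have hsL : Real.sinh L = Real.sqrt (R / Δ) := Real.sinh_arsinh _
    have s4 : |Real.sinh u| < Real.sqrt (R / Δ) ↔ |u| < L := by
      rw [abs_lt, abs_lt, ← hsL, ← Real.sinh_neg, Real.sinh_lt_sinh, Real.sinh_lt_sinh]
    rw [s1, s2, s3, s4]
  rw [key, abs_lt, hu]
  have e : L / S * S = L := div_mul_cancel₀ L (ne_of_gt hS)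
  constructor
  · rintro ⟨ha, hb⟩
    constructor
    · nlinarith [e, hS, hb]
    · nlinarith [e, hS, ha]
  · rintro ⟨ha, hb⟩
    constructor
    · nlinarith [e, hS, hb]
    · nlinarith [e, hS, ha]
end
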